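/- arXiv:2003.13521 — 2 statements merged into one kernel-verified Lean document; each statement's English description precedes it below -/
import Mathlib

section
/- For every ε > 0 there exists n_ε such that for all n ≥ n_ε: if the bias b satisfies b ≥ (1+ε)·n/log n, then Breaker has a winning strategy in the (1:b) Maker-Breaker Hamiltonicity game on the complete digraph K⃗_n, i.e. Breaker can guarantee that at the end of play the digraph on [n] formed by Maker's claimed edges contains no directed Hamilton cycle. -/
/-- A digraph on `Fin n`, given by its edge set, is Hamiltonian if it contains a directed
cycle passing through every vertex exactly once: there is a cyclic enumeration of all the
vertices all of whose consecutive pairs are edges. -/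
def IsHamiltonian {n : ℕ} (E : Finset (Fin n × Fin n)) : Prop :=
  ∃ σ : ZMod n → Fin n, Function.Bijective σ ∧ ∀ i : ZMod n, (σ i, σ (i + 1)) ∈ E

/-- The board of the complete digraph on `Fin n`: all ordered pairs `(i, j)` with `i ≠ j`. -/
def diboard (n : ℕ) : Finset (Fin n × Fin n) :=
  Finset.univ.filter (fun p => p.1 ≠ p.2)

/-- `MakerWins board b P M B` : in the (1 : b) Maker-Breaker game on `board`, from the
position where Maker has claimed `M`, Breaker has claimed `B`, and Maker is to move,
Maker can force that when the board is exhausted the final position satisfies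
`P (Maker's set) (Breaker's set)`.  Maker claims one unclaimed element per turn, Breaker
then claims `b` unclaimed elements (or all remaining ones, if fewer than `b` remain). -/
inductive MakerWins {X : Type*} [DecidableEq X] (board : Finset X) (b : ℕ)
    (P : Finset X → Finset X → Prop) : Finset X → Finset X → Prop
  | terminal {M B : Finset X} (hend : board \ (M ∪ B) = ∅) (hP : P M B) :
      MakerWins board b P M B
  | move {M B : Finset X} (x : X) (hx : x ∈ board \ (M ∪ B))
      (h : ∀ Y ⊆ board \ (insert x M ∪ B),
        Y.card = min b (board \ (insert x M ∪ B)).card →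
        MakerWins board b P (insert x M) (B ∪ Y)) :
      MakerWins board b P M B

/-- `BreakerWins board b P M B` : in the (1 : b) Maker-Breaker game on `board`, from the
position where Maker has claimed `M`, Breaker has claimed `B`, and Maker is to move,
Breaker can force that when the board is exhausted the final position satisfies
`P (Maker's set) (Breaker's set)`. -/
inductive BreakerWins {X : Type*} [DecidableEq X] (board : Finset X) (b : ℕ)
    (P : Finset X → Finset X → Prop) : Finset X → Finset X → Prop
  | terminal {M B : Finset X} (hend : board \ (M ∪ B) = ∅) (hP : P M B) :
      BreakerWins board b P M B
  | move {M B : Finset X} (hne : board \ (M ∪ B) ≠ ∅)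
      (Y : ∀ x ∈ board \ (M ∪ B), Finset X)
      (hY : ∀ (x : X) (hx : x ∈ board \ (M ∪ B)),
        Y x hx ⊆ board \ (insert x M ∪ B) ∧
        (Y x hx).card = min b (board \ (insert x M ∪ B)).card)
      (h : ∀ (x : X) (hx : x ∈ board \ (M ∪ B)),
        BreakerWins board b P (insert x M) (B ∪ Y x hx)) :
      BreakerWins board b P M B

/-!
Maker's digraph is not Hamiltonian as soon as some vertex has no out-edge of Maker, so Breaker
plays a box game on the out-stars. He keeps a set `A` of vertices whose out-stars Maker has not
touched; each Maker move removes at most one vertex from `A`, and Breaker answers by claiming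
`⌊b / |A|⌋` free edges in every surviving out-star. Then a surviving out-star never has more
than `∑_{0 < k < |A|} ⌊b / k⌋` free edges; this is `0` when `|A| = 1`, so Maker can never touch
the last vertex of `A`. Starting with `m = n / ⌈2 / ε⌉` vertices, the out-stars of size `n - 1`
meet the bound since `∑_{0 < k < m} ⌊b / k⌋ ≥ b log m - m ≥ n - 1` for `b ≥ (1 + ε) n / log n`
and `n` large.
-/

open Finset Real

theorem BreakerWins.of_invariant {X : Type*} [DecidableEq X] {board : Finset X} {b : ℕ}
    {P : Finset X → Finset X → Prop} (I : Finset X → Finset X → Prop)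
    (hP : ∀ M B, I M B → board \ (M ∪ B) = ∅ → P M B)
    (hstep : ∀ M B, I M B → ∀ x ∈ board \ (M ∪ B), ∃ Y ⊆ board \ (insert x M ∪ B),
      #Y = min b #(board \ (insert x M ∪ B)) ∧ I (insert x M) (B ∪ Y))
    {M B : Finset X} (h : I M B) : BreakerWins board b P M B := by
  induction hN : #(board \ (M ∪ B)) using Nat.strong_induction_on generalizing M B with
  | _ N ih =>
  by_cases hend : board \ (M ∪ B) = ∅
  · exact .terminal hend (hP M B h hend)
  choose Y hYsub hYcard hI using hstep M B h
  refine .move hend Y (fun x hx => ⟨hYsub x hx, hYcard x hx⟩) fun x hx => ih _ ?_ (hI x hx) rfl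
  rw [← hN]
  refine card_lt_card ((ssubset_iff_of_subset ?_).mpr ⟨x, hx, by simp⟩)
  exact sdiff_subset_sdiff subset_rfl (union_subset_union (subset_insert _ _) subset_union_left)

theorem exists_evenly_spread_subset {X V : Type*} [DecidableEq X] [DecidableEq V] (f : X → V)
    (F : Finset X) (A : Finset V) (b : ℕ) :
    ∃ Y ⊆ F, #Y = min b #F ∧
      ∀ v ∈ A, #{x ∈ F \ Y | f x = v} ≤ #{x ∈ F | f x = v} - b / #A := by
  choose S hSsub hScard using fun v =>
    exists_subset_card_eq (min_le_right (b / #A) #{x ∈ F | f x = v})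
  have hSF : A.biUnion S ⊆ F := biUnion_subset.mpr fun v _ => (hSsub v).trans (filter_subset _ _)
  have hSb : #(A.biUnion S) ≤ b :=
    calc #(A.biUnion S) ≤ ∑ v ∈ A, #(S v) := card_biUnion_le
      _ ≤ #A * (b / #A) := sum_le_card_nsmul _ _ _ fun v _ => hScard v ▸ min_le_left _ _
      _ ≤ b := Nat.mul_div_le b #A
  obtain ⟨Y, hSY, hYF, hY⟩ :=
    exists_subsuperset_card_eq hSF (le_min hSb (card_le_card hSF)) (min_le_right _ _)
  refine ⟨Y, hYF, hY, fun v hv => ?_⟩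
  have hSvY : S v ⊆ Y := (subset_biUnion_of_mem S hv).trans hSY
  calc #{x ∈ F \ Y | f x = v} ≤ #({x ∈ F | f x = v} \ S v) := by
        refine card_le_card fun x => ?_
        simp only [mem_filter, mem_sdiff]
        exact fun ⟨⟨hxF, hxY⟩, hxv⟩ => ⟨⟨hxF, hxv⟩, fun hxS => hxY (hSvY hxS)⟩
    _ = #{x ∈ F | f x = v} - #(S v) := card_sdiff_of_subset (hSsub v)
    _ ≤ #{x ∈ F | f x = v} - b / #A := by have := hScard v; omega

def boxBound (b m : ℕ) : ℕ := ∑ k ∈ Ico 1 m, b / k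

theorem boxBound_succ (b m : ℕ) : boxBound b (m + 1) = boxBound b m + b / m := by
  rcases m.eq_zero_or_pos with rfl | hm
  · simp [boxBound]
  · exact sum_Ico_succ_top hm _

theorem boxBound_mono (b : ℕ) : Monotone (boxBound b) :=
  fun _ _ h => sum_le_sum_of_subset (Ico_subset_Ico_right h)

section Boxes

variable {X V : Type*} [DecidableEq X] [DecidableEq V]

def BoxInvariant (board : Finset X) (b : ℕ) (f : X → V) (M B : Finset X) : Prop :=
  ∃ A : Finset V, A.Nonempty ∧ (∀ x ∈ M, f x ∉ A) ∧
    ∀ v ∈ A, #{x ∈ board \ (M ∪ B) | f x = v} ≤ boxBound b #A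

variable {board : Finset X} {b : ℕ} {f : X → V} {M B : Finset X}

theorem BoxInvariant.step (h : BoxInvariant board b f M B) {x : X}
    (hx : x ∈ board \ (M ∪ B)) :
    ∃ Y ⊆ board \ (insert x M ∪ B), #Y = min b #(board \ (insert x M ∪ B)) ∧
      BoxInvariant board b f (insert x M) (B ∪ Y) := by
  obtain ⟨A, hA, hAM, hAfree⟩ := h
  set F := board \ (insert x M ∪ B)
  set A' := A.erase (f x)
  obtain ⟨Y, hYF, hY, hfiber⟩ := exists_evenly_spread_subset f F A' b
  have hFsub : F ⊆ board \ (M ∪ B) :=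
    sdiff_subset_sdiff subset_rfl (union_subset_union (subset_insert _ _) subset_rfl)
  have hfree : board \ (insert x M ∪ (B ∪ Y)) = F \ Y := by
    ext y; simp only [F, mem_sdiff, mem_union]; tauto
  refine ⟨Y, hYF, hY, A', ?_, ?_, fun v hv => ?_⟩
  · rw [nonempty_iff_ne_empty, Ne, erase_eq_empty_iff]
    rintro (rfl | rfl)
    · exact not_nonempty_empty hA
    · have := hAfree (f x) (mem_singleton_self _)
      simp only [card_singleton, boxBound, Ico_self, sum_empty, Nat.le_zero, card_eq_zero,
        filter_eq_empty_iff] at this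
      exact this hx rfl
  · simp only [A', mem_insert, mem_erase, forall_eq_or_imp]
    exact ⟨fun h => h.1 rfl, fun y hy h => hAM y hy h.2⟩
  · have hvA := mem_of_mem_erase hv
    have hcard : boxBound b #A ≤ boxBound b #A' + b / #A' :=
      have : #A - 1 ≤ #A' := pred_card_le_card_erase
      boxBound_succ b #A' ▸ boxBound_mono b (by omega)
    calc #{y ∈ board \ (insert x M ∪ (B ∪ Y)) | f y = v}
        = #{y ∈ F \ Y | f y = v} := by rw [hfree]
      _ ≤ #{y ∈ F | f y = v} - b / #A' := hfiber v hv
      _ ≤ boxBound b #A - b / #A' :=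
        Nat.sub_le_sub_right ((card_le_card (filter_subset_filter _ hFsub)).trans (hAfree v hvA)) _
      _ ≤ boxBound b #A' := by omega

theorem BreakerWins.of_boxInvariant {P : Finset X → Finset X → Prop}
    (hP : ∀ M B v, (∀ x ∈ M, f x ≠ v) → P M B) (h : BoxInvariant board b f M B) :
    BreakerWins board b P M B :=
  BreakerWins.of_invariant _
    (fun M B ⟨_, ⟨v, hv⟩, hAM, _⟩ _ => hP M B v fun x hx hxv => hAM x hx (hxv ▸ hv))
    (fun _ _ h _ hx => h.step hx) h

end Boxes

theorem mul_log_sub_le_boxBound (b m : ℕ) : (b : ℝ) * log m - m ≤ boxBound b m := by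
  rcases m with _ | m
  · simp [boxBound]
  have hfloor : ∀ k : ℕ, (b : ℝ) * (k : ℝ)⁻¹ - 1 ≤ (b / k : ℕ) := fun k => by
    rw [← Nat.floor_div_eq_div (K := ℝ), ← div_eq_mul_inv]
    exact (Nat.sub_one_lt_floor _).le
  have hharmonic : log (m + 1 : ℕ) ≤ ∑ k ∈ Ico 1 (m + 1), (k : ℝ)⁻¹ := by
    simpa [harmonic_eq_sum_Icc, Finset.Ico_add_one_right_eq_Icc] using log_add_one_le_harmonic m
  calc (b : ℝ) * log (m + 1 : ℕ) - (m + 1 : ℕ)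
      ≤ (b : ℝ) * ∑ k ∈ Ico 1 (m + 1), (k : ℝ)⁻¹ - m := by
        gcongr
        linarith
    _ = ∑ k ∈ Ico 1 (m + 1), ((b : ℝ) * (k : ℝ)⁻¹ - 1) := by simp [mul_sum]
    _ ≤ boxBound b (m + 1) := by
        rw [boxBound, Nat.cast_sum]
        exact sum_le_sum fun k _ => hfloor k

open Filter in
theorem eventually_exists_le_boxBound {ε : ℝ} (hε : 0 < ε) :
    ∀ᶠ n : ℕ in atTop, ∀ b : ℕ, (1 + ε) * n / log n ≤ b →
      ∃ m, 0 < m ∧ m ≤ n ∧ n - 1 ≤ boxBound b m := by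
  set K := ⌈2 / ε⌉₊
  have hK : 0 < K := Nat.ceil_pos.mpr (by positivity)
  have hεK : 2 / ε ≤ K := Nat.le_ceil _
  have hlog : ∀ᶠ n : ℕ in atTop, 2 * (1 + ε) * log (2 * K) / ε ≤ log n :=
    (tendsto_log_atTop.comp tendsto_natCast_atTop_atTop).eventually_ge_atTop _
  filter_upwards [hlog, eventually_ge_atTop (2 * K)] with n hlogn hn b hb
  set m := n / K
  have hm : 0 < m := Nat.div_pos (by omega) hK
  refine ⟨m, hm, Nat.div_le_self _ _, ?_⟩
  suffices (n : ℝ) ≤ boxBound b m by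
    have : n ≤ boxBound b m := by exact_mod_cast this
    omega
  have hn1 : (1 : ℝ) < n := by norm_cast; omega
  have hL : 0 < log n := log_pos hn1
  have hc : 0 ≤ log (2 * K) := log_nonneg (by norm_cast; omega)
  have hcL : (1 + ε) * log (2 * K) ≤ ε / 2 * log n := by
    rw [div_le_iff₀ hε] at hlogn; linarith
  have hnm : (n : ℝ) ≤ 2 * K * m := by
    have : n < K * (m + 1) := Nat.lt_mul_div_succ n hK
    have : K ≤ K * m := Nat.le_mul_of_pos_right K hm
    norm_cast; linarith
  have hlogm : log n - log (2 * K) ≤ log m := by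
    rw [← log_div (by positivity) (by positivity)]
    exact log_le_log (by positivity) ((div_le_iff₀' (by positivity)).mpr hnm)
  have hmε : (m : ℝ) ≤ ε / 2 * n := by
    have h2 : 2 ≤ K * ε := (div_le_iff₀ hε).mp hεK
    calc (m : ℝ) ≤ n / K := Nat.cast_div_le
      _ ≤ ε / 2 * n := by rw [div_le_iff₀ (by positivity)]; nlinarith
  calc (n : ℝ) = (1 + ε) * n - ε / 2 * n - ε / 2 * n := by ring
    _ ≤ (1 + ε) * n / log n * (log n - log (2 * K)) - m := by
        have : (1 + ε) * n - ε / 2 * n ≤ (1 + ε) * n / log n * (log n - log (2 * K)) := by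
          rw [div_mul_eq_mul_div _ (log (n : ℝ)), le_div_iff₀ hL]
          nlinarith
        linarith
    _ ≤ b * (log n - log (2 * K)) - m := by gcongr; nlinarith
    _ ≤ b * log m - m := by gcongr
    _ ≤ boxBound b m := mul_log_sub_le_boxBound b m

theorem IsHamiltonian.exists_out_edge {n : ℕ} {E : Finset (Fin n × Fin n)}
    (h : IsHamiltonian E) (v : Fin n) : ∃ w, (v, w) ∈ E := by
  obtain ⟨σ, hσ, hE⟩ := h
  obtain ⟨i, rfl⟩ := hσ.2 v
  exact ⟨_, hE i⟩

theorem card_diboard_filter_fst (n : ℕ) (v : Fin n) :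
    #{p ∈ diboard n | p.1 = v} = n - 1 := by
  have : {p ∈ diboard n | p.1 = v} = (univ.erase v).image (Prod.mk v) := by
    ext ⟨u, w⟩
    simp only [diboard, ne_eq, mem_filter, mem_univ, true_and, mem_image, mem_erase, and_true,
      Prod.mk.injEq, exists_eq_right_right]
    grind
  rw [this, card_image_of_injective _ (Prod.mk_right_injective v), card_erase_of_mem (mem_univ v),
    card_univ, Fintype.card_fin]

/-- For every `ε > 0` there is `n_ε` such that for all `n ≥ n_ε`, if `b ≥ (1+ε)·n / log n`
then Breaker has a winning strategy in the (1 : b) Hamiltonicity game on the complete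
digraph on `n` vertices: Breaker can guarantee that at the end of play Maker's digraph
contains no directed Hamilton cycle. -/
theorem breaker_wins_hamiltonicity (ε : ℝ) (hε : 0 < ε) :
    ∃ nε : ℕ, ∀ n : ℕ, nε ≤ n → ∀ b : ℕ,
      (1 + ε) * n / Real.log n ≤ (b : ℝ) →
      BreakerWins (diboard n) b (fun M _ => ¬ IsHamiltonian M) ∅ ∅ := by
  obtain ⟨nε, hnε⟩ := (eventually_exists_le_boxBound hε).exists_forall_of_atTop
  refine ⟨nε, fun n hn b hb => ?_⟩
  obtain ⟨m, hm, hmn, hbound⟩ := hnε n hn b hb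
  obtain ⟨A, -, hA⟩ := exists_subset_card_eq (s := (univ : Finset (Fin n))) (by simpa using hmn)
  refine BreakerWins.of_boxInvariant (f := Prod.fst) (fun M _ v hv hM => ?_)
    ⟨A, card_pos.mp (hA ▸ hm), by simp, fun v _ => ?_⟩
  · obtain ⟨w, hw⟩ := hM.exists_out_edge v
    exact hv _ hw rfl
  · simpa [hA, card_diboard_filter_fst] using hbound
end

section
/- For every ε > 0 there exists n_ε such that for all n ≥ n_ε: if the bias b satisfies b ≥ (1+ε)·n/log n, then in the (1:b) Maker-Breaker game on the edge set of the complete digraph K⃗_n, Breaker has a strategy guaranteeing that at the end of play there is a vertex v ∈ [n] such that Breaker has claimed all n−1 edges (v,u) with u ≠ v; in particular, Maker's final digraph has a vertex of out-degree 0. -/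
/-!
Breaker plays the Chvátal–Erdős box game on the out-stars, the fibres of `Prod.fst`. A box is
live while Maker has no edge in it, and Maker's move kills at most one live box. Breaker keeps
the unclaimed parts of the live boxes balanced, and as long as none of them has at most `b`
unclaimed edges he spends his `b` edges on them. If `k` boxes are live, their unclaimed parts
have total size at most `k (b - 1) H_{k-1}`: the killed box holds at least the average minus
one, which pays for the decrease of the bound. With a single live box the bound is `0`, so at
some point a live box has at most `b` unclaimed edges and Breaker claims all of them. Initially
the bound reads `n - 1 ≤ (b - 1) H_{n-1}`, which holds for `b ≥ (1 + ε) n / log n` and large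
`n` because `log n ≤ H_{n-1}` and `log n = o(n)`.
-/

open Finset

variable {X : Type*}

namespace BreakerWins

variable [DecidableEq X] {board : Finset X} {b : ℕ}

theorem mono {P Q : Finset X → Finset X → Prop} (hPQ : ∀ M B, P M B → Q M B)
    {M B : Finset X} (h : BreakerWins board b P M B) : BreakerWins board b Q M B := by
  induction h with
  | terminal hend hP => exact .terminal hend (hPQ _ _ hP)
  | move hne Y hY _ ih => exact .move hne Y hY ih

theorem of_invariant_s4 {P : Finset X → Finset X → Prop} (I : Finset X → Finset X → Prop)
    (hend : ∀ M B, I M B → board \ (M ∪ B) = ∅ → P M B)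
    (hstep : ∀ M B, I M B → ∀ x ∈ board \ (M ∪ B), ∃ Y ⊆ board \ (insert x M ∪ B),
      #Y = min b #(board \ (insert x M ∪ B)) ∧ I (insert x M) (B ∪ Y))
    {M B : Finset X} (h : I M B) : BreakerWins board b P M B := by
  induction hN : #(board \ (M ∪ B)) using Nat.strong_induction_on generalizing M B with
  | _ N ih =>
  by_cases hne : board \ (M ∪ B) = ∅
  · exact .terminal hne (hend M B h hne)
  choose Y hYsub hYcard hYI using hstep M B h
  refine .move hne Y (fun x hx => ⟨hYsub x hx, hYcard x hx⟩)
    fun x hx => ih _ (hN ▸ card_lt_card ?_) (hYI x hx) rfl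
  exact (ssubset_iff_of_subset (by grind)).2 ⟨x, hx, by simp⟩

end BreakerWins

section CardBalanced

variable {ι : Type*}

def CardBalanced (A : Finset ι) (s : ι → Finset X) : Prop :=
  ∀ i ∈ A, ∀ j ∈ A, #(s i) ≤ #(s j) + 1

theorem CardBalanced.mono {A A' : Finset ι} {s : ι → Finset X} (h : CardBalanced A s)
    (hA : A' ⊆ A) : CardBalanced A' s :=
  fun i hi j hj => h i (hA hi) j (hA hj)

theorem cardBalanced_singleton (i : ι) (s : ι → Finset X) : CardBalanced {i} s := by
  simp [CardBalanced]

variable [DecidableEq X]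

theorem sum_card_sdiff_add_card {A : Finset ι} {s : ι → Finset X}
    (hs : (A : Set ι).PairwiseDisjoint s) {Y : Finset X} (hY : Y ⊆ A.biUnion s) :
    ∑ i ∈ A, #(s i \ Y) + #Y = ∑ i ∈ A, #(s i) := by
  have hsY : (A : Set ι).PairwiseDisjoint (s · \ Y) := hs.mono fun _ => sdiff_subset
  rw [← card_biUnion hs, ← card_biUnion hsY, ← card_sdiff_add_card_eq_card hY]
  congr 2
  ext x
  simp only [mem_biUnion, mem_sdiff]
  tauto

theorem CardBalanced.sdiff_singleton {A : Finset ι} {s : ι → Finset X}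
    (hs : (A : Set ι).PairwiseDisjoint s) (hbal : CardBalanced A s) {i₀ : ι}
    (hi₀ : i₀ ∈ A) (hmax : ∀ i ∈ A, #(s i) ≤ #(s i₀)) {e : X} (he : e ∈ s i₀) :
    CardBalanced A (s · \ {e}) := by
  have hi₀e : #(s i₀ \ {e}) + 1 = #(s i₀) :=
    card_sdiff_add_card_eq_card (singleton_subset_iff.2 he)
  intro i hi j hj
  dsimp only
  have hi_le : #(s i \ {e}) ≤ #(s i) := card_le_card sdiff_subset
  by_cases hj₀ : j = i₀
  · subst hj₀
    linarith [hmax i hi]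
  · have hej : e ∉ s j := fun hej => disjoint_left.1 (hs hj hi₀ hj₀) hej he
    rw [sdiff_singleton_eq_erase e (s j), erase_eq_of_notMem hej]
    linarith [hbal i hi j hj]

theorem CardBalanced.exists_subset_card_eq {A : Finset ι} {s : ι → Finset X}
    (hs : (A : Set ι).PairwiseDisjoint s) (hbal : CardBalanced A s) {k : ℕ}
    (hk : k ≤ ∑ i ∈ A, #(s i)) :
    ∃ Y ⊆ A.biUnion s, #Y = k ∧ CardBalanced A (s · \ Y) := by
  induction k with
  | zero => exact ⟨∅, empty_subset _, card_empty, by simpa using hbal⟩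
  | succ k ih =>
    obtain ⟨Y, hYs, hYk, hYbal⟩ := ih (by omega)
    have hsum := sum_card_sdiff_add_card hs hYs
    obtain ⟨i₁, hi₁, hpos⟩ := sum_pos_iff.1 (show 0 < ∑ i ∈ A, #(s i \ Y) by omega)
    obtain ⟨i₀, hi₀, hmax⟩ := exists_max_image A (fun i => #(s i \ Y)) ⟨i₁, hi₁⟩
    obtain ⟨e, he⟩ := card_pos.1 (hpos.trans_le (hmax i₁ hi₁))
    have hsplit : ∀ i, s i \ insert e Y = (s i \ Y) \ {e} := fun i => by
      rw [sdiff_sdiff_left, insert_eq, union_comm]; rfl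
    refine ⟨insert e Y, insert_subset (mem_biUnion.2 ⟨i₀, hi₀, (mem_sdiff.1 he).1⟩) hYs,
      by rw [card_insert_of_notMem (mem_sdiff.1 he).2, hYk], ?_⟩
    simp_rw [hsplit]
    exact hYbal.sdiff_singleton (hs.mono fun _ => sdiff_subset) hi₀ hmax he

end CardBalanced

-- `S + r` is the total of `m + 2` balanced live boxes and `r` the one Maker kills: by balance
-- `r` is at least the average minus one, which pays for the step from `H_{m+1}` to `H_m`.
theorem le_mul_harmonic_add_of_add_le {m : ℕ} {S r b : ℚ}
    (hbal : S + r ≤ (m + 2) * (r + 1)) (hpot : S + r ≤ (m + 2) * (b - 1) * harmonic (m + 1)) :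
    S ≤ (m + 1) * (b - 1) * harmonic m + b := by
  have hS : (m + 2) * S ≤ (m + 2) * ((m + 1) * (b - 1) * harmonic (m + 1) + 1) := by
    nlinarith
  have hH :
      (m + 1) * (b - 1) * harmonic (m + 1) = (m + 1) * (b - 1) * harmonic m + (b - 1) := by
    rw [harmonic_succ]
    field_simp
    push_cast
    ring
  linarith [le_of_mul_le_mul_left hS (by positivity)]

section FiberGame

variable [DecidableEq X] {ι : Type*} [DecidableEq ι] (board : Finset X) (f : X → ι)

def unclaimed (B : Finset X) (i : ι) : Finset X := {x ∈ board \ B | f x = i}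

def FiberClaimed (M B : Finset X) : Prop :=
  ∃ i, (∀ x ∈ board, f x = i → x ∈ B) ∧ ∀ x ∈ M, f x ≠ i

structure BoxGameInvariant (b : ℕ) (M B : Finset X) (A : Finset ι) : Prop where
  nonempty : A.Nonempty
  avoids : ∀ x ∈ M, f x ∉ A
  balanced : CardBalanced A (unclaimed board f B)
  potential :
    ((∑ i ∈ A, #(unclaimed board f B i) : ℕ) : ℚ) ≤ #A * (b - 1) * harmonic (#A - 1)

variable {board f}

theorem pairwiseDisjoint_unclaimed (B : Finset X) (s : Set ι) :
    s.PairwiseDisjoint (unclaimed board f B) := fun _ _ _ _ hij =>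
  disjoint_left.2 fun _ hi hj => hij ((mem_filter.1 hi).2.symm.trans (mem_filter.1 hj).2)

theorem unclaimed_union (B Y : Finset X) (i : ι) :
    unclaimed board f (B ∪ Y) i = unclaimed board f B i \ Y := by
  ext x
  simp only [unclaimed, mem_filter, mem_sdiff, mem_union]
  tauto

theorem unclaimed_subset_sdiff {M B : Finset X} {i : ι} (hM : ∀ x ∈ M, f x ≠ i) :
    unclaimed board f B i ⊆ board \ (M ∪ B) := by
  intro x hx
  simp only [unclaimed, mem_filter, mem_sdiff, mem_union] at hx ⊢
  exact ⟨hx.1.1, fun h => h.elim (fun hxM => hM x hxM hx.2) hx.1.2⟩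

theorem mem_unclaimed_of_mem_sdiff {M B : Finset X} {x : X} (hx : x ∈ board \ (M ∪ B)) :
    x ∈ unclaimed board f B (f x) := by
  simp only [unclaimed, mem_filter, mem_sdiff, mem_union] at hx ⊢
  tauto

theorem fiberClaimed_of_unclaimed_eq_empty {M B : Finset X} {i : ι}
    (h : unclaimed board f B i = ∅) (hM : ∀ x ∈ M, f x ≠ i) : FiberClaimed board f M B := by
  refine ⟨i, fun x hx hxi => ?_, hM⟩
  by_contra hxB
  have hx' : x ∈ unclaimed board f B i := mem_filter.2 ⟨mem_sdiff.2 ⟨hx, hxB⟩, hxi⟩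
  simp [h] at hx'


namespace BoxGameInvariant

variable {b : ℕ} {M B : Finset X} {A : Finset ι} {x : X}

theorem after_maker_move (h : BoxGameInvariant board f b M B A) (hx : x ∈ board \ (M ∪ B)) :
    (A.erase (f x)).Nonempty ∧ (∀ y ∈ insert x M, f y ∉ A.erase (f x)) ∧
      ((∑ i ∈ A.erase (f x), #(unclaimed board f B i) : ℕ) : ℚ) ≤
        #(A.erase (f x)) * (b - 1) * harmonic (#(A.erase (f x)) - 1) + b := by
  have havoid : ∀ y ∈ insert x M, f y ∉ A.erase (f x) := by
    intro y hy
    rcases mem_insert.1 hy with rfl | hyM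
    · exact notMem_erase _ _
    · exact fun hyA => h.avoids y hyM (mem_of_mem_erase hyA)
  by_cases hxA : f x ∈ A
  swap
  · rw [erase_eq_of_notMem hxA]
    exact ⟨h.nonempty, erase_eq_of_notMem hxA ▸ havoid, by linarith [h.potential]⟩
  set c : ι → ℕ := fun i => #(unclaimed board f B i)
  have hr : 1 ≤ c (f x) := card_pos.2 ⟨x, mem_unclaimed_of_mem_sdiff hx⟩
  have hsplit : ∑ i ∈ A.erase (f x), c i + c (f x) = ∑ i ∈ A, c i := sum_erase_add A c hxA
  have hbal : ∑ i ∈ A, c i ≤ #A * (c (f x) + 1) :=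
    sum_le_card_nsmul _ _ _ fun i hi => h.balanced i hi (f x) hxA
  have hcard : #(A.erase (f x)) + 1 = #A := card_erase_add_one hxA
  have hpot : ((∑ i ∈ A, c i : ℕ) : ℚ) ≤ #A * (b - 1) * harmonic (#A - 1) := h.potential
  obtain ⟨m, hm⟩ : ∃ m, #(A.erase (f x)) = m + 1 := by
    refine Nat.exists_eq_succ_of_ne_zero fun h0 => ?_
    rw [← hcard, h0] at hpot
    have hle : c (f x) ≤ ∑ i ∈ A, c i := single_le_sum (fun _ _ => Nat.zero_le _) hxA
    have hzero : ((∑ i ∈ A, c i : ℕ) : ℚ) ≤ 0 := by simpa using hpot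
    have : ∑ i ∈ A, c i ≤ 0 := by exact_mod_cast hzero
    omega
  refine ⟨card_pos.1 (by omega), havoid, ?_⟩
  have hA : #A = m + 2 := by omega
  rw [hA, ← hsplit, show m + 2 - 1 = m + 1 from rfl] at hpot
  rw [hA, ← hsplit] at hbal
  rw [hm, Nat.add_sub_cancel]
  push_cast at hpot hbal ⊢
  exact le_mul_harmonic_add_of_add_le (by exact_mod_cast hbal) hpot

theorem exists_response (h : BoxGameInvariant board f b M B A) (hx : x ∈ board \ (M ∪ B)) :
    ∃ Y ⊆ board \ (insert x M ∪ B), #Y = min b #(board \ (insert x M ∪ B)) ∧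
      ∃ A', BoxGameInvariant board f b (insert x M) (B ∪ Y) A' := by
  obtain ⟨⟨w, hw⟩, havoid, hpot⟩ := h.after_maker_move hx
  set A' := A.erase (f x)
  have hfree : ∀ i ∈ A', unclaimed board f B i ⊆ board \ (insert x M ∪ B) :=
    fun i hi => unclaimed_subset_sdiff fun y hy hyi => havoid y hy (hyi ▸ hi)
  by_cases hsmall : ∃ w ∈ A', #(unclaimed board f B w) ≤ b
  · obtain ⟨w, hw, hwb⟩ := hsmall
    obtain ⟨Y, hwY, hY, hYcard⟩ := exists_subsuperset_card_eq (hfree w hw)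
      (le_min hwb (card_le_card (hfree w hw))) (min_le_right _ _)
    refine ⟨Y, hY, hYcard, {w}, singleton_nonempty w, ?_, cardBalanced_singleton _ _, ?_⟩
    · exact fun y hy hyw => havoid y hy (mem_singleton.1 hyw ▸ hw)
    · simp [unclaimed_union, sdiff_eq_empty_iff_subset.2 hwY]
  push Not at hsmall
  have hb : b ≤ ∑ i ∈ A', #(unclaimed board f B i) :=
    (hsmall w hw).le.trans <|
      single_le_sum (f := fun i => #(unclaimed board f B i)) (fun _ _ => Nat.zero_le _) hw
  have hdisj := pairwiseDisjoint_unclaimed (f := f) (board := board) B A'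
  obtain ⟨Y, hYs, hYcard, hYbal⟩ :=
    (h.balanced.mono (erase_subset _ _)).exists_subset_card_eq hdisj hb
  have hY : Y ⊆ board \ (insert x M ∪ B) := hYs.trans (biUnion_subset.2 hfree)
  have hsum := sum_card_sdiff_add_card hdisj hYs
  simp_rw [← unclaimed_union, hYcard] at hsum hYbal
  refine ⟨Y, hY, by rw [hYcard, min_eq_left (hYcard ▸ card_le_card hY)],
    A', ⟨w, hw⟩, havoid, hYbal, ?_⟩
  rw [← hsum] at hpot
  push_cast at hpot ⊢
  linarith

theorem fiberClaimed_of_sdiff_eq_empty (h : BoxGameInvariant board f b M B A)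
    (hend : board \ (M ∪ B) = ∅) : FiberClaimed board f M B := by
  obtain ⟨i, hi⟩ := h.nonempty
  have hM : ∀ y ∈ M, f y ≠ i := fun y hy hyi => h.avoids y hy (hyi ▸ hi)
  exact fiberClaimed_of_unclaimed_eq_empty
    (subset_empty.1 (hend ▸ unclaimed_subset_sdiff hM)) hM

theorem breakerWins (h : BoxGameInvariant board f b M B A) :
    BreakerWins board b (FiberClaimed board f) M B :=
  BreakerWins.of_invariant_s4 (fun M B => ∃ A, BoxGameInvariant board f b M B A)
    (fun _ _ ⟨_, hA⟩ hend => hA.fiberClaimed_of_sdiff_eq_empty hend)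
    (fun _ _ ⟨_, hA⟩ _ hx => hA.exists_response hx) ⟨A, h⟩

end BoxGameInvariant

end FiberGame

theorem card_unclaimed_diboard_empty (n : ℕ) (v : Fin n) :
    #(unclaimed (diboard n) Prod.fst ∅ v) = n - 1 := by
  have h : unclaimed (diboard n) Prod.fst ∅ v = {v} ×ˢ univ.erase v := by
    ext ⟨u, w⟩
    simp only [unclaimed, diboard, sdiff_empty, mem_filter, mem_univ, true_and, mem_product,
      mem_singleton, mem_erase]
    grind
  simp [h]

theorem boxGameInvariant_diboard {n b : ℕ} (hn : 1 ≤ n)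
    (h : ((n - 1 : ℕ) : ℚ) ≤ (b - 1) * harmonic (n - 1)) :
    BoxGameInvariant (diboard n) Prod.fst b ∅ ∅ univ where
  nonempty := univ_nonempty_iff.2 ⟨⟨0, hn⟩⟩
  avoids := by simp
  balanced := by simp [CardBalanced, card_unclaimed_diboard_empty]
  potential := by
    simp only [card_unclaimed_diboard_empty, sum_const, card_univ, Fintype.card_fin, smul_eq_mul,
      Nat.cast_mul, mul_assoc]
    gcongr

theorem eventually_sub_one_le_harmonic {ε : ℝ} (hε : 0 < ε) :
    ∀ᶠ n : ℕ in Filter.atTop, ∀ b : ℕ, (1 + ε) * n / Real.log n ≤ b →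
      ((n - 1 : ℕ) : ℚ) ≤ (b - 1) * harmonic (n - 1) := by
  have hlog : ∀ᶠ n : ℕ in Filter.atTop, Real.log n ≤ ε * n := by
    filter_upwards
      [tendsto_natCast_atTop_atTop.eventually (Real.isLittleO_log_id_atTop.bound hε)] with n hn
    simpa using (le_abs_self _).trans hn
  filter_upwards [hlog, Filter.eventually_ge_atTop 2] with n hlog hn b hb
  have hn1 : ((n - 1 : ℕ) : ℝ) = n - 1 := by push_cast [Nat.cast_sub (by omega : 1 ≤ n)]; ring
  have hlogpos : 0 < Real.log n := Real.log_pos (by exact_mod_cast hn)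
  have hbL : (1 + ε) * n ≤ b * Real.log n := (div_le_iff₀ hlogpos).1 hb
  have hb1 : (1 : ℝ) ≤ b :=
    Nat.one_le_cast.2 (Nat.cast_pos.1 ((by positivity : (0 : ℝ) < _).trans_le hb))
  have hH : Real.log n ≤ harmonic (n - 1) := by
    simpa [Nat.sub_add_cancel (by omega : 1 ≤ n)] using log_add_one_le_harmonic (n - 1)
  have : ((n - 1 : ℕ) : ℝ) ≤ (b - 1) * harmonic (n - 1) := by
    rw [hn1]
    nlinarith [mul_le_mul_of_nonneg_left hH (sub_nonneg.2 hb1)]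
  exact_mod_cast this

/-- For every `ε > 0` there is `n_ε` such that for all `n ≥ n_ε`, if `b ≥ (1+ε)·n / log n`
then in the (1 : b) Maker-Breaker game on the complete digraph on `n` vertices, Breaker
has a strategy guaranteeing that at the end of play there is a vertex `v` such that
Breaker has claimed all `n − 1` edges `(v, u)` with `u ≠ v`; in particular Maker's final
digraph has a vertex of out-degree `0`. -/
theorem breaker_claims_all_out_edges (ε : ℝ) (hε : 0 < ε) :
    ∃ nε : ℕ, ∀ n : ℕ, nε ≤ n → ∀ b : ℕ,
      (1 + ε) * n / Real.log n ≤ (b : ℝ) →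
      BreakerWins (diboard n) b
        (fun M B => ∃ v : Fin n,
          (∀ u : Fin n, u ≠ v → (v, u) ∈ B) ∧ (∀ u : Fin n, (v, u) ∉ M)) ∅ ∅ := by
  obtain ⟨N, hN⟩ := ((eventually_sub_one_le_harmonic hε).and
    (Filter.eventually_ge_atTop 1)).exists_forall_of_atTop
  refine ⟨N, fun n hn b hb => ?_⟩
  obtain ⟨hpot, hn1⟩ := hN n hn
  refine (boxGameInvariant_diboard hn1 (hpot b hb)).breakerWins.mono ?_
  rintro M B ⟨v, hB, hM⟩
  exact ⟨v, fun u hu => hB _ (by simp [diboard, hu.symm]) rfl, fun u huM => hM _ huM rfl⟩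
end
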